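/- arXiv:1910.12338 — 3 statements merged into one kernel-verified Lean document; each statement's English description precedes it below -/
import Mathlib

section
/- Let X, Y be Banach spaces, let T : X → Y be a bounded Fredholm operator, let V be a finite dimensional vector space, and let Δ : X → V be a bounded surjective linear map. Set X₀ := ker Δ and T₀ := T|_{X₀} : X₀ → Y. Then: (1) ker T₀ = ker(Δ|_{ker T}) = ker T ∩ ker Δ, and (2) there is a short exact sequence 0 → coker(Δ|_{ker T}) → coker T₀ → coker T → 0; in particular dim coker T₀ = dim coker T + dim V − dim Δ(ker T). -/
/-- Snake-lemma description of the restriction of a bounded operator T to the kernel of a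
    bounded surjection Δ onto a finite dimensional space: the kernel of T₀ = T|_{ker Δ} is
    ker T ∩ ker Δ, there is a short exact sequence
    0 → coker(Δ|_{ker T}) → coker T₀ → coker T → 0, and therefore
    dim coker T₀ + dim Δ(ker T) = dim coker T + dim V. -/
theorem stmt_5 {X Y V : Type*} [NormedAddCommGroup X] [NormedSpace ℝ X] [CompleteSpace X]
    [NormedAddCommGroup Y] [NormedSpace ℝ Y] [CompleteSpace Y]
    [NormedAddCommGroup V] [NormedSpace ℝ V] [FiniteDimensional ℝ V]
    (T : X →L[ℝ] Y)
    (hT : FiniteDimensional ℝ (LinearMap.ker (T : X →ₗ[ℝ] Y)) ∧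
      IsClosed (LinearMap.range (T : X →ₗ[ℝ] Y) : Set Y) ∧
      FiniteDimensional ℝ (Y ⧸ LinearMap.range (T : X →ₗ[ℝ] Y)))
    (Δ : X →L[ℝ] V) (hΔ : Function.Surjective Δ) :
    Submodule.map (LinearMap.ker (Δ : X →ₗ[ℝ] V)).subtype
        (LinearMap.ker ((T.comp (LinearMap.ker (Δ : X →ₗ[ℝ] V)).subtypeL :
            LinearMap.ker (Δ : X →ₗ[ℝ] V) →ₗ[ℝ] Y)))
      = LinearMap.ker (T : X →ₗ[ℝ] Y) ⊓ LinearMap.ker (Δ : X →ₗ[ℝ] V) ∧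
    (∃ (f : (V ⧸ Submodule.map (Δ : X →ₗ[ℝ] V) (LinearMap.ker (T : X →ₗ[ℝ] Y))) →ₗ[ℝ]
          (Y ⧸ LinearMap.range ((T.comp (LinearMap.ker (Δ : X →ₗ[ℝ] V)).subtypeL :
            LinearMap.ker (Δ : X →ₗ[ℝ] V) →ₗ[ℝ] Y))))
        (g : (Y ⧸ LinearMap.range ((T.comp (LinearMap.ker (Δ : X →ₗ[ℝ] V)).subtypeL :
            LinearMap.ker (Δ : X →ₗ[ℝ] V) →ₗ[ℝ] Y))) →ₗ[ℝ]
          (Y ⧸ LinearMap.range (T : X →ₗ[ℝ] Y))),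
        Function.Injective f ∧ Function.Surjective g ∧ LinearMap.range f = LinearMap.ker g) ∧
    Module.finrank ℝ (Y ⧸ LinearMap.range ((T.comp (LinearMap.ker (Δ : X →ₗ[ℝ] V)).subtypeL :
        LinearMap.ker (Δ : X →ₗ[ℝ] V) →ₗ[ℝ] Y)))
        + Module.finrank ℝ (Submodule.map (Δ : X →ₗ[ℝ] V) (LinearMap.ker (T : X →ₗ[ℝ] Y)))
      = Module.finrank ℝ (Y ⧸ LinearMap.range (T : X →ₗ[ℝ] Y)) + Module.finrank ℝ V := by
  classical
  obtain ⟨-, -, hcoker⟩ := hT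
  set T₀ := (T.comp (LinearMap.ker (Δ : X →ₗ[ℝ] V)).subtypeL :
    LinearMap.ker (Δ : X →ₗ[ℝ] V) →ₗ[ℝ] Y) with hT₀
  set R₀ : Submodule ℝ Y := LinearMap.range T₀ with hR₀
  set K : Submodule ℝ V := Submodule.map (Δ : X →ₗ[ℝ] V) (LinearMap.ker (T : X →ₗ[ℝ] Y)) with hK
  -- a linear right inverse of Δ
  obtain ⟨s, hs⟩ := (Δ : X →ₗ[ℝ] V).exists_rightInverse_of_surjective
    (LinearMap.range_eq_top.2 hΔ)
  have hsv : ∀ v, Δ (s v) = v := fun v => congrArg (fun m => m v) hs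
  -- part 1
  have part1 : Submodule.map (LinearMap.ker (Δ : X →ₗ[ℝ] V)).subtype (LinearMap.ker T₀)
      = LinearMap.ker (T : X →ₗ[ℝ] Y) ⊓ LinearMap.ker (Δ : X →ₗ[ℝ] V) := by
    ext x
    simp only [Submodule.mem_map, LinearMap.mem_ker, Submodule.mem_inf]
    constructor
    · rintro ⟨⟨x, hx⟩, hTx, rfl⟩
      exact ⟨hTx, hx⟩
    · rintro ⟨hTx, hx⟩
      exact ⟨⟨x, hx⟩, hTx, rfl⟩
  -- auxiliary map F : V → Y ⧸ R₀
  set F : V →ₗ[ℝ] Y ⧸ R₀ := R₀.mkQ.comp ((T : X →ₗ[ℝ] Y).comp s) with hF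
  have hKF : K ≤ LinearMap.ker F := by
    rintro v ⟨x, hx, rfl⟩
    have hmem : (T : X →ₗ[ℝ] Y) (s (Δ x)) ∈ R₀ := by
      refine ⟨⟨s (Δ x) - x, ?_⟩, ?_⟩
      · simp [LinearMap.mem_ker, hsv]
      · have : T x = 0 := hx
        simp [hT₀, this]
    simpa [hF, Submodule.Quotient.mk_eq_zero] using hmem
  set f : (V ⧸ K) →ₗ[ℝ] Y ⧸ R₀ := K.liftQ F hKF with hf
  set g : (Y ⧸ R₀) →ₗ[ℝ] Y ⧸ LinearMap.range (T : X →ₗ[ℝ] Y) :=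
    R₀.liftQ (LinearMap.range (T : X →ₗ[ℝ] Y)).mkQ (by
      rw [Submodule.ker_mkQ]
      rintro _ ⟨x, rfl⟩
      exact ⟨x.1, rfl⟩) with hg
  have hfinj : Function.Injective f := by
    rw [← LinearMap.ker_eq_bot]
    refine Submodule.ker_liftQ_eq_bot _ _ _ ?_
    intro v hv
    have hv' : (T : X →ₗ[ℝ] Y) (s v) ∈ R₀ := by
      simpa [hF, Submodule.Quotient.mk_eq_zero] using hv
    obtain ⟨x₀, hx₀⟩ := hv'
    refine ⟨s v - x₀.1, ?_, ?_⟩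
    · have : T (x₀ : X) = T (s v) := hx₀
      simp [LinearMap.mem_ker, map_sub, this]
    · have := x₀.2
      simp only [LinearMap.mem_ker] at this
      simp [map_sub, hsv, this]
  have hgsurj : Function.Surjective g := by
    intro c
    obtain ⟨y, rfl⟩ := Submodule.mkQ_surjective _ c
    exact ⟨R₀.mkQ y, rfl⟩
  have hrange : LinearMap.range f = LinearMap.ker g := by
    apply le_antisymm
    · rintro _ ⟨a, rfl⟩
      obtain ⟨v, rfl⟩ := Submodule.mkQ_surjective _ a
      simp only [LinearMap.mem_ker, hf, hg, Submodule.mkQ_apply, Submodule.liftQ_apply,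
        hF, LinearMap.comp_apply, Submodule.Quotient.mk_eq_zero]
      exact ⟨s v, rfl⟩
    · intro b hb
      obtain ⟨y, rfl⟩ := Submodule.mkQ_surjective _ b
      have hy : y ∈ LinearMap.range (T : X →ₗ[ℝ] Y) := by
        simpa [hg, Submodule.Quotient.mk_eq_zero] using hb
      obtain ⟨x, rfl⟩ := hy
      refine ⟨Submodule.Quotient.mk (Δ x), ?_⟩
      simp only [hf, Submodule.liftQ_apply, hF, LinearMap.comp_apply, Submodule.mkQ_apply]
      rw [Submodule.Quotient.eq]
      refine ⟨⟨s (Δ x) - x, ?_⟩, ?_⟩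
      · simp [LinearMap.mem_ker, hsv]
      · simp [hT₀]
  refine ⟨part1, ⟨f, g, hfinj, hgsurj, hrange⟩, ?_⟩
  -- dimension count
  have hA : FiniteDimensional ℝ (V ⧸ K) := inferInstance
  have hker : FiniteDimensional ℝ (LinearMap.ker g) := by
    rw [← hrange]
    exact Module.Finite.equiv (LinearEquiv.ofInjective f hfinj)
  have hquot : FiniteDimensional ℝ ((Y ⧸ R₀) ⧸ LinearMap.ker g) :=
    Module.Finite.equiv (g.quotKerEquivOfSurjective hgsurj).symm
  have hB : FiniteDimensional ℝ (Y ⧸ R₀) := by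
    refine Module.rank_lt_aleph0_iff.mp ?_
    rw [← Submodule.rank_quotient_add_rank (LinearMap.ker g)]
    exact Cardinal.add_lt_aleph0 (Module.rank_lt_aleph0_iff.2 hquot)
      (Module.rank_lt_aleph0_iff.2 hker)
  have e1 : Module.finrank ℝ ((Y ⧸ R₀) ⧸ LinearMap.ker g) + Module.finrank ℝ (LinearMap.ker g)
      = Module.finrank ℝ (Y ⧸ R₀) := Submodule.finrank_quotient_add_finrank _
  have e2 : Module.finrank ℝ (V ⧸ K) + Module.finrank ℝ K = Module.finrank ℝ V :=
    Submodule.finrank_quotient_add_finrank _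
  have e3 : Module.finrank ℝ (LinearMap.ker g) = Module.finrank ℝ (V ⧸ K) := by
    rw [← hrange]
    exact (LinearEquiv.ofInjective f hfinj).finrank_eq.symm
  have e4 : Module.finrank ℝ ((Y ⧸ R₀) ⧸ LinearMap.ker g)
      = Module.finrank ℝ (Y ⧸ LinearMap.range (T : X →ₗ[ℝ] Y)) :=
    (g.quotKerEquivOfSurjective hgsurj).finrank_eq
  omega
end

section
/- Let X, Y be Banach spaces, let T : X → Y be a bounded surjective linear operator with finite dimensional kernel, and let r : Y → X be a bounded right inverse of T (i.e. T ∘ r = id_Y). Let K ⊆ X be a finite dimensional subspace with dim K = dim ker T such that ‖r(Tκ)‖ < ‖κ‖ for every nonzero κ ∈ K. Then X = im(r) ⊕ K; that is, every x ∈ X can be written uniquely as x = r(η) + κ with η ∈ Y and κ ∈ K. -/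
/-- If T is a bounded surjection with finite dimensional kernel, r is a bounded right
    inverse of T, and K is a subspace with dim K = dim ker T such that ‖r(Tκ)‖ < ‖κ‖ for
    all nonzero κ ∈ K, then X = im(r) ⊕ K: every x decomposes uniquely as r(η) + κ. -/
theorem stmt_8 {X Y : Type*} [NormedAddCommGroup X] [NormedSpace ℝ X]
    [NormedAddCommGroup Y] [NormedSpace ℝ Y]
    (T : X →L[ℝ] Y) (hsurj : Function.Surjective T)
    (hker : FiniteDimensional ℝ (LinearMap.ker (T : X →ₗ[ℝ] Y)))
    (r : Y →L[ℝ] X) (hr : T.comp r = ContinuousLinearMap.id ℝ Y)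
    (K : Submodule ℝ X) (hKfin : FiniteDimensional ℝ K)
    (hdim : Module.finrank ℝ K = Module.finrank ℝ (LinearMap.ker (T : X →ₗ[ℝ] Y)))
    (hnorm : ∀ κ ∈ K, κ ≠ 0 → ‖r (T κ)‖ < ‖κ‖) :
    ∀ x : X, ∃! p : Y × K, x = r p.1 + (p.2 : X) := by
  have hTr : ∀ y, T (r y) = y := fun y => ContinuousLinearMap.ext_iff.mp hr y
  -- the map φ : K → ker T, κ ↦ κ - r(Tκ)
  let φ : K →ₗ[ℝ] LinearMap.ker (T : X →ₗ[ℝ] Y) :=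
    { toFun := fun κ => ⟨(κ : X) - r (T κ), by
        simp [LinearMap.mem_ker, hTr]⟩
      map_add' := fun a b => by ext; simp; abel
      map_smul' := fun c a => by ext; simp [smul_sub] }
  have hφinj : Function.Injective φ := by
    intro a b hab
    have h : (a : X) - r (T a) = (b : X) - r (T b) := congrArg Subtype.val hab
    by_contra hne
    have hsub : ((a - b : K) : X) ≠ 0 := by
      simpa [sub_eq_zero] using fun h' : (a:X) = (b:X) => hne (Subtype.ext h')
    have := hnorm ((a - b : K) : X) (a - b).2 hsub
    have heq : (((a - b : K)) : X) = r (T ((a - b : K) : X)) := by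
      push_cast
      have h2 : (a : X) - (b : X) = r (T a) - r (T b) := sub_eq_sub_iff_sub_eq_sub.mp h
      simpa [map_sub] using h2
    rw [← heq] at this
    exact absurd this (lt_irrefl _)
  have hφsurj : Function.Surjective φ :=
    (LinearMap.injective_iff_surjective_of_finrank_eq_finrank hdim).mp hφinj
  intro x
  have hxker : x - r (T x) ∈ LinearMap.ker (T : X →ₗ[ℝ] Y) := by simp [LinearMap.mem_ker, hTr]
  obtain ⟨κ, hκ⟩ := hφsurj ⟨x - r (T x), hxker⟩
  have hκ' : (κ : X) - r (T κ) = x - r (T x) := congrArg Subtype.val hκ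
  refine ⟨(T x - T κ, κ), ?_, ?_⟩
  · simp only [map_sub]
    have hx : r (T x) - r (T ↑κ) + (κ : X) = x := by
      calc r (T x) - r (T ↑κ) + (κ : X) = r (T x) + ((κ : X) - r (T ↑κ)) := by abel
        _ = r (T x) + (x - r (T x)) := by rw [hκ']
        _ = x := by abel
    exact hx.symm
  · rintro ⟨η, κ'⟩ h
    have hTx : T x = η + T κ' := by
      rw [h]; simp [hTr]
    have hφeq : φ κ' = φ κ := by
      apply Subtype.ext
      show (κ' : X) - r (T κ') = (κ : X) - r (T κ)
      rw [hκ']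
      have hx : x = r η + (κ' : X) := h
      rw [hx]
      simp only [map_add, hTr]
      abel
    have hκeq : κ' = κ := hφinj hφeq
    have hηeq : η = T x - T ↑κ := by
      rw [hκeq] at hTx
      rw [hTx]; abel
    simp [hκeq, hηeq]
end

section
/- Let X, Y be topological spaces, let f : V → X and g : W → Y be continuous maps from topological spaces V, W. For a continuous map h : Z → S define the limit set Ω(h) := ⋂_{K ⊆ Z compact} closure(h(Z ∖ K)). Assume V and W are noncompact (or more generally Ω is computed over compact K). If closure(f(V)) and closure(g(W)) are compact and X, Y are Hausdorff, then Ω(f × g) ⊆ (Ω(f) × closure(g(W))) ∪ (closure(f(V)) × Ω(g)), where f × g : V × W → X × Y is the product map. -/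
/-- The limit set ("boundary" of a pseudocycle) of a map h : Z → S. -/
def limitSet {Z S : Type*} [TopologicalSpace Z] [TopologicalSpace S] (h : Z → S) : Set S :=
  ⋂ (K : Set Z) (_ : IsCompact K), closure (h '' Kᶜ)

/-- The limit set of a product map is contained in
    (Ω(f) × closure(g(W))) ∪ (closure(f(V)) × Ω(g)). -/
theorem stmt_10 {V W X Y : Type*} [TopologicalSpace V] [TopologicalSpace W]
    [TopologicalSpace X] [TopologicalSpace Y] [T2Space X] [T2Space Y]
    (f : V → X) (g : W → Y) (hf : Continuous f) (hg : Continuous g)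
    (hfc : IsCompact (closure (Set.range f))) (hgc : IsCompact (closure (Set.range g))) :
    limitSet (Prod.map f g)
      ⊆ (limitSet f ×ˢ closure (Set.range g)) ∪ (closure (Set.range f) ×ˢ limitSet g) := by
  intro p hp
  -- From K = ∅ : p ∈ closure (range f) ×ˢ closure (range g)
  have h0 : p ∈ closure ((Prod.map f g) '' (∅ : Set (V × W))ᶜ) := by
    have := Set.mem_iInter.1 hp (∅ : Set (V × W))
    exact Set.mem_iInter.1 this isCompact_empty
  have hrange : p ∈ closure (Set.range f) ×ˢ closure (Set.range g) := by
    have : ((Prod.map f g) '' (∅ : Set (V × W))ᶜ) = Set.range f ×ˢ Set.range g := by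
      rw [Set.compl_empty, Set.image_univ, Set.range_prodMap]
    rw [this, closure_prod_eq] at h0
    exact h0
  by_cases hx : p.1 ∈ limitSet f
  · exact Or.inl ⟨hx, hrange.2⟩
  by_cases hy : p.2 ∈ limitSet g
  · exact Or.inr ⟨hrange.1, hy⟩
  exfalso
  -- extract compact sets witnessing failure
  simp only [limitSet, Set.mem_iInter, not_forall] at hx hy
  obtain ⟨K, hK, hxK⟩ := hx
  obtain ⟨L, hL, hyL⟩ := hy
  have hp' : p ∈ closure ((Prod.map f g) '' (K ×ˢ L)ᶜ) := by
    have := Set.mem_iInter.1 hp (K ×ˢ L)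
    exact Set.mem_iInter.1 this (hK.prod hL)
  have hsub : (Prod.map f g) '' (K ×ˢ L)ᶜ ⊆
      (f '' Kᶜ) ×ˢ Set.range g ∪ Set.range f ×ˢ (g '' Lᶜ) := by
    rintro q ⟨⟨v, w⟩, hvw, rfl⟩
    have hvw' : v ∉ K ∨ w ∉ L := by
      by_cases hv : v ∈ K
      · exact Or.inr (by simpa [Set.mem_prod, hv] using hvw)
      · exact Or.inl hv
    rcases hvw' with h | h
    · exact Or.inl ⟨⟨v, h, rfl⟩, ⟨w, rfl⟩⟩
    · exact Or.inr ⟨⟨v, rfl⟩, ⟨w, h, rfl⟩⟩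
  have := closure_mono hsub hp'
  rw [closure_union, closure_prod_eq, closure_prod_eq] at this
  rcases this with h | h
  · exact hxK h.1
  · exact hyL h.2
end
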